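/- arXiv:2603.19554 — 4 statements merged into one kernel-verified Lean document; each statement's English description precedes it below -/
import Mathlib

section
/- The set of Parry numbers that are not simple Parry numbers is dense in (1, ∞): for all real numbers u, v with 1 < u < v, there exists a real β with u < β < v such that β is a Parry number but not a simple Parry number. -/
/-- The β-transformation `x ↦ βx - ⌊βx⌋`. -/
noncomputable def betaT (β : ℝ) (x : ℝ) : ℝ := β * x - ⌊β * x⌋

/-- `β` is a Parry number: `β > 1` and the forward orbit of `1` under the
β-transformation is finite. -/
def IsParry (β : ℝ) : Prop :=
  1 < β ∧ Set.Finite {x : ℝ | ∃ n : ℕ, 1 ≤ n ∧ (betaT β)^[n] 1 = x}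

/-- `β` is a simple Parry number: Parry, and the orbit of `1` hits `0`. -/
def IsSimpleParry (β : ℝ) : Prop :=
  IsParry β ∧ ∃ n : ℕ, 1 ≤ n ∧ (betaT β)^[n] 1 = 0

/-- `β` is a Perron number: a real algebraic integer `β > 1` all of whose Galois
conjugates other than `β` itself have complex absolute value `< β`. -/
def IsPerron (β : ℝ) : Prop :=
  1 < β ∧ IsIntegral ℤ β ∧
    ∀ z : ℂ, Polynomial.aeval z (minpoly ℚ β) = 0 → z ≠ (β : ℂ) → ‖z‖ < β

/-- `β` is a Pisot number. -/
def IsPisot (β : ℝ) : Prop :=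
  1 < β ∧ IsIntegral ℤ β ∧
    ∀ z : ℂ, Polynomial.aeval z (minpoly ℚ β) = 0 → z ≠ (β : ℂ) → ‖z‖ < 1

/-- `β` is a Salem number. -/
def IsSalem (β : ℝ) : Prop :=
  1 < β ∧ IsIntegral ℤ β ∧
    (∀ z : ℂ, Polynomial.aeval z (minpoly ℚ β) = 0 → z ≠ (β : ℂ) → ‖z‖ ≤ 1) ∧
    (∃ z : ℂ, Polynomial.aeval z (minpoly ℚ β) = 0 ∧ ‖z‖ = 1)

/-- `β` has Parry order exactly `n`: if `n ≥ 1` then `β ^ n` is Parry, and no higher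
power of `β` is Parry. -/
def HasParryOrder (β : ℝ) (n : ℕ) : Prop :=
  (1 ≤ n → IsParry (β ^ n)) ∧ ∀ k : ℕ, n < k → ¬ IsParry (β ^ k)

/-- Mahler measure of an algebraic number `β`: product of `max 1 |α|` over the complex
roots `α` of the minimal polynomial of `β` over `ℚ`. -/
noncomputable def mahlerMeasureOf (β : ℝ) : ℝ :=
  (((minpoly ℚ β).map (algebraMap ℚ ℂ)).roots.map (fun z => max 1 (‖z‖))).prod

/-!
Take a transcendental `β ∈ (u, v)`: its orbit `T_β^j(1) = P_j(β)`, where `P_0 = 1` and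
`P_{j+1} = X P_j - d_j` with the greedy digits `d_j = ⌊β T_β^j(1)⌋`, never vanishes. For `B ≤ β`
the orbit of `1` under `T_B` is `P_j(B)` for as long as these values stay positive. Some `P_n` is
negative at `u` (the ratio `P_n(x)/x^n` drops by a fixed amount from `β` to `u` while
`P_n(β)/β^n → 0`), so the intermediate value theorem gives `B ∈ (u, β)` with
`P_n(B) (B^(m+1) - 1) = 1` for a large `m`. Then `τ = T_B^n(1) = P_n(B) > 0` satisfies
`B^(m+1) τ = 1 + τ` and `B^i τ < 1` for `i ≤ m`, so `T_B` runs through `τ, Bτ, …, B^m τ` and back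
to `τ`: the orbit of `1` is finite and never reaches the fixed point `0`.
-/

open Polynomial

namespace Function

variable {α : Type*} {f : α → α} {x : α} {n p : ℕ}

theorem finite_range_iterate_of_isPeriodicPt (hp : 0 < p) (h : IsPeriodicPt f p (f^[n] x)) :
    (Set.range fun k => f^[k] x).Finite := by
  refine ((Set.finite_lt_nat (n + p)).image fun k => f^[k] x).subset ?_
  rintro _ ⟨k, rfl⟩
  rcases lt_or_ge k (n + p) with hk | hk
  · exact ⟨k, hk, rfl⟩
  · obtain ⟨j, rfl⟩ := Nat.exists_eq_add_of_le (show n ≤ k by omega)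
    refine ⟨n + j % p, show n + j % p < n + p by have := Nat.mod_lt j hp; omega, ?_⟩
    simp only [add_comm n, iterate_add_apply, h.iterate_mod_apply]

theorem iterate_ne_of_isPeriodicPt {y : α} (hy : IsFixedPt f y) (hp : 0 < p)
    (h : IsPeriodicPt f p (f^[n] x)) (hne : f^[n] x ≠ y) (k : ℕ) : f^[k] x ≠ y := by
  intro hk
  apply hne
  have hle : k ≤ k * p + n := by nlinarith
  rw [← (h.const_mul k).eq, ← iterate_add_apply, ← Nat.sub_add_cancel hle, iterate_add_apply, hk,
    hy.iterate]

end Function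

theorem betaT_nonneg (β x : ℝ) : 0 ≤ betaT β x := Int.fract_nonneg _

theorem betaT_lt_one (β x : ℝ) : betaT β x < 1 := Int.fract_lt_one _

theorem betaT_zero (β : ℝ) : betaT β 0 = 0 := by simp [betaT]

theorem betaT_eq_sub_of_mem_Ico {β x : ℝ} {d : ℤ} (h : β * x - d ∈ Set.Ico 0 1) :
    betaT β x = β * x - d := by
  have : ⌊β * x⌋ = d := Int.floor_eq_iff.2 ⟨by linarith [h.1], by linarith [h.2]⟩
  rw [betaT, this]

theorem iterate_betaT_eq_pow_mul {β x : ℝ} (hβ : 1 ≤ β) (hx : 0 ≤ x) {k : ℕ}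
    (hk : β ^ k * x < 1) : (betaT β)^[k] x = β ^ k * x := by
  induction k with
  | zero => simp
  | succ k ih =>
    have hle : β ^ k * x ≤ β ^ (k + 1) * x :=
      mul_le_mul_of_nonneg_right (pow_le_pow_right₀ hβ k.le_succ) hx
    have hmul : β * (β ^ k * x) = β ^ (k + 1) * x := by ring
    rw [Function.iterate_succ_apply', ih (hle.trans_lt hk)]
    exact (Int.fract_eq_self.2 (hmul ▸ ⟨by positivity, hk⟩)).trans hmul

theorem isPeriodicPt_betaT {β τ : ℝ} {m : ℕ} (hβ : 1 ≤ β) (hτ : 0 ≤ τ) (hm : β ^ m * τ < 1)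
    (heq : β ^ (m + 1) * τ = 1 + τ) : Function.IsPeriodicPt (betaT β) (m + 1) τ := by
  have hτ1 : τ < 1 := lt_of_le_of_lt (le_mul_of_one_le_left hτ (one_le_pow₀ hβ)) hm
  have hmul : β * (β ^ m * τ) - (1 : ℤ) = τ := by push_cast; linear_combination heq
  show (betaT β)^[m + 1] τ = τ
  rw [Function.iterate_succ_apply', iterate_betaT_eq_pow_mul hβ hτ hm,
    betaT_eq_sub_of_mem_Ico (by rw [hmul]; exact ⟨hτ, hτ1⟩), hmul]

theorem isParry_and_not_isSimpleParry_of_isPeriodicPt {β : ℝ} {n p : ℕ} (hβ : 1 < β) (hp : 0 < p)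
    (h : Function.IsPeriodicPt (betaT β) p ((betaT β)^[n] 1)) (hne : (betaT β)^[n] 1 ≠ 0) :
    IsParry β ∧ ¬ IsSimpleParry β := by
  refine ⟨⟨hβ, (Function.finite_range_iterate_of_isPeriodicPt hp h).subset ?_⟩, ?_⟩
  · rintro _ ⟨k, -, rfl⟩
    exact ⟨k, rfl⟩
  · rintro ⟨-, k, -, hk⟩
    exact Function.iterate_ne_of_isPeriodicPt (betaT_zero β) hp h hne k hk

noncomputable def betaDigit (β : ℝ) (j : ℕ) : ℤ := ⌊β * (betaT β)^[j] 1⌋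

noncomputable def betaOrbitPoly (β : ℝ) : ℕ → ℤ[X]
  | 0 => 1
  | j + 1 => X * betaOrbitPoly β j - C (betaDigit β j)

section betaOrbitPoly

variable {β B : ℝ} {n : ℕ}

theorem iterate_betaT_one_nonneg (β : ℝ) (j : ℕ) : 0 ≤ (betaT β)^[j] 1 := by
  cases j with
  | zero => exact zero_le_one
  | succ j => rw [Function.iterate_succ_apply']; exact betaT_nonneg _ _

theorem iterate_betaT_one_lt_one (β : ℝ) (j : ℕ) : (betaT β)^[j + 1] 1 < 1 := by
  rw [Function.iterate_succ_apply']; exact betaT_lt_one _ _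

theorem betaDigit_nonneg (hβ : 0 ≤ β) (j : ℕ) : 0 ≤ betaDigit β j :=
  Int.floor_nonneg.2 (mul_nonneg hβ (iterate_betaT_one_nonneg β j))

theorem one_le_betaDigit_zero (hβ : 1 ≤ β) : 1 ≤ betaDigit β 0 := by
  simp only [betaDigit, Function.iterate_zero_apply, mul_one]
  exact Int.le_floor.2 (by simpa using hβ)

theorem monic_betaOrbitPoly (β : ℝ) (j : ℕ) : (betaOrbitPoly β j).Monic := by
  induction j with
  | zero => exact monic_one
  | succ j ih => unfold betaOrbitPoly; monicity!

theorem aeval_betaOrbitPoly_succ (x : ℝ) (j : ℕ) :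
    aeval x (betaOrbitPoly β (j + 1)) = x * aeval x (betaOrbitPoly β j) - betaDigit β j := by
  simp [betaOrbitPoly]

theorem aeval_betaOrbitPoly_self (β : ℝ) (j : ℕ) :
    aeval β (betaOrbitPoly β j) = (betaT β)^[j] 1 := by
  induction j with
  | zero => simp [betaOrbitPoly]
  | succ j ih => rw [aeval_betaOrbitPoly_succ, ih, Function.iterate_succ_apply', betaT, betaDigit]

theorem iterate_betaT_one_ne_zero (hβ : Transcendental ℤ β) (j : ℕ) : (betaT β)^[j] 1 ≠ 0 :=
  aeval_betaOrbitPoly_self β j ▸ fun h => hβ ⟨_, (monic_betaOrbitPoly β j).ne_zero, h⟩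

theorem aeval_betaOrbitPoly_pos_of_le (hB : 0 < B) (hβ : 0 ≤ β)
    (hn : 0 < aeval B (betaOrbitPoly β n)) {j : ℕ} (hj : j ≤ n) :
    0 < aeval B (betaOrbitPoly β j) := by
  induction n with
  | zero => rwa [Nat.le_zero.1 hj]
  | succ n ih =>
    rcases hj.lt_or_eq with hj | rfl
    · refine ih ?_ (Nat.le_of_lt_succ hj)
      rw [aeval_betaOrbitPoly_succ] at hn
      have : (0 : ℝ) ≤ betaDigit β n := by exact_mod_cast betaDigit_nonneg hβ n
      exact pos_of_mul_pos_right (by linarith) hB.le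
    · exact hn

theorem aeval_betaOrbitPoly_le_iterate_betaT (hB : 0 < B) (hBβ : B ≤ β)
    (hn : 0 < aeval B (betaOrbitPoly β n)) {j : ℕ} (hj : j ≤ n) :
    aeval B (betaOrbitPoly β j) ≤ (betaT β)^[j] 1 := by
  induction j with
  | zero => simp [betaOrbitPoly]
  | succ j ih =>
    have hpos := aeval_betaOrbitPoly_pos_of_le hB (hB.le.trans hBβ) hn (j.le_succ.trans hj)
    rw [← aeval_betaOrbitPoly_self, aeval_betaOrbitPoly_succ, aeval_betaOrbitPoly_succ,
      aeval_betaOrbitPoly_self]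
    gcongr
    · exact hB.le.trans hBβ
    · exact ih (j.le_succ.trans hj)

theorem iterate_betaT_one_eq_aeval (hB : 0 < B) (hBβ : B ≤ β)
    (hn : 0 < aeval B (betaOrbitPoly β n)) {j : ℕ} (hj : j ≤ n) :
    (betaT B)^[j] 1 = aeval B (betaOrbitPoly β j) := by
  induction j with
  | zero => simp [betaOrbitPoly]
  | succ j ih =>
    rw [Function.iterate_succ_apply', ih (j.le_succ.trans hj), aeval_betaOrbitPoly_succ]
    apply betaT_eq_sub_of_mem_Ico
    rw [← aeval_betaOrbitPoly_succ]
    exact ⟨(aeval_betaOrbitPoly_pos_of_le hB (hB.le.trans hBβ) hn hj).le,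
      (aeval_betaOrbitPoly_le_iterate_betaT hB hBβ hn hj).trans_lt (iterate_betaT_one_lt_one β j)⟩

end betaOrbitPoly

section ratio

variable {β w : ℝ}

theorem aeval_betaOrbitPoly_div_pow_succ {x : ℝ} (hx : x ≠ 0) (j : ℕ) :
    aeval x (betaOrbitPoly β (j + 1)) / x ^ (j + 1) =
      aeval x (betaOrbitPoly β j) / x ^ j - betaDigit β j / x ^ (j + 1) := by
  rw [aeval_betaOrbitPoly_succ]
  field_simp
  ring

-- `P_j(x) / x ^ j = 1 - ∑_{i < j} d_i / x ^ (i + 1)`, and already the term `i = 0` drops by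
-- `d_0 (1/w - 1/β)` when `x` goes down from `β` to `w`.
theorem aeval_betaOrbitPoly_div_pow_add_le (hw : 0 < w) (hwβ : w ≤ β) (j : ℕ) :
    aeval w (betaOrbitPoly β (j + 1)) / w ^ (j + 1) + betaDigit β 0 * (1 / w - 1 / β) ≤
      (betaT β)^[j + 1] 1 / β ^ (j + 1) := by
  have hβ : 0 < β := hw.trans_le hwβ
  rw [← aeval_betaOrbitPoly_self]
  induction j with
  | zero =>
    rw [aeval_betaOrbitPoly_div_pow_succ hw.ne', aeval_betaOrbitPoly_div_pow_succ hβ.ne']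
    simp only [betaOrbitPoly, map_one, pow_zero, zero_add, pow_one]
    exact le_of_eq (by ring)
  | succ j ih =>
    rw [aeval_betaOrbitPoly_div_pow_succ hw.ne' (j + 1),
      aeval_betaOrbitPoly_div_pow_succ hβ.ne' (j + 1)]
    have : (betaDigit β (j + 1) : ℝ) / β ^ (j + 2) ≤ betaDigit β (j + 1) / w ^ (j + 2) :=
      div_le_div_of_nonneg_left (by exact_mod_cast betaDigit_nonneg hβ.le _) (by positivity)
        (pow_le_pow_left₀ hw.le hwβ _)
    linarith

theorem exists_aeval_betaOrbitPoly_neg (hw : 0 < w) (hwβ : w < β) (hβ : 1 < β) :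
    ∃ n, aeval w (betaOrbitPoly β n) < 0 := by
  have hc : 0 < betaDigit β 0 * (1 / w - 1 / β) := by
    have : (1 : ℝ) ≤ betaDigit β 0 := by exact_mod_cast one_le_betaDigit_zero hβ.le
    exact mul_pos (by linarith) (sub_pos.2 (one_div_lt_one_div_of_lt hw hwβ))
  obtain ⟨j, hj⟩ := exists_pow_lt_of_lt_one hc (inv_lt_one_of_one_lt₀ hβ)
  have hlt : (betaT β)^[j + 1] 1 / β ^ (j + 1) < β⁻¹ ^ j := calc
    _ < 1 / β ^ (j + 1) := by gcongr; exact iterate_betaT_one_lt_one β j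
    _ ≤ β⁻¹ ^ j := by
      rw [one_div, ← inv_pow]
      exact pow_le_pow_of_le_one (by positivity) (inv_le_one_of_one_le₀ hβ.le) j.le_succ
  refine ⟨j + 1, neg_of_div_neg_left ?_ (pow_nonneg hw.le (j + 1))⟩
  linarith [aeval_betaOrbitPoly_div_pow_add_le hw hwβ.le j]

end ratio

theorem exists_isParry_not_isSimpleParry_mem_Ioo {w β : ℝ} (hw : 1 < w) (hwβ : w < β)
    (hβ : Transcendental ℤ β) : ∃ B ∈ Set.Ioo w β, IsParry B ∧ ¬ IsSimpleParry B := by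
  have hβ1 : 1 < β := hw.trans hwβ
  obtain ⟨n, hwn⟩ := exists_aeval_betaOrbitPoly_neg (by linarith) hwβ hβ1
  have hτ : 0 < aeval β (betaOrbitPoly β n) := by
    rw [aeval_betaOrbitPoly_self]
    exact (iterate_betaT_one_nonneg β n).lt_of_ne' (iterate_betaT_one_ne_zero hβ n)
  obtain ⟨m, hβm, hwm⟩ :
      ∃ m : ℕ, 1 + (aeval β (betaOrbitPoly β n))⁻¹ < β ^ m ∧ 1 < w ^ m * (w - 1) :=
    (((tendsto_pow_atTop_atTop_of_one_lt hβ1).eventually_gt_atTop _).and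
      (((tendsto_pow_atTop_atTop_of_one_lt hw).atTop_mul_const (sub_pos.2 hw)).eventually_gt_atTop
        1)).exists
  obtain ⟨B, ⟨hwB, hBβ⟩, hB⟩ :
      ∃ B ∈ Set.Ioo w β, aeval B (betaOrbitPoly β n) * (B ^ (m + 1) - 1) = 1 := by
    refine intermediate_value_Ioo hwβ.le (Continuous.continuousOn (by fun_prop)) ⟨?_, ?_⟩
    · have : 0 < w ^ (m + 1) - 1 := sub_pos.2 (one_lt_pow₀ hw m.succ_ne_zero)
      exact (mul_neg_of_neg_of_pos hwn this).trans one_pos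
    · have : (aeval β (betaOrbitPoly β n))⁻¹ < β ^ (m + 1) - 1 := by
        linarith [pow_le_pow_right₀ hβ1.le (m.le_add_right 1)]
      calc 1 = aeval β (betaOrbitPoly β n) * (aeval β (betaOrbitPoly β n))⁻¹ :=
            (mul_inv_cancel₀ hτ.ne').symm
        _ < _ := mul_lt_mul_of_pos_left this hτ
  have hB1 : 1 < B := hw.trans hwB
  have hBpow : B ^ m < B ^ (m + 1) - 1 := by
    have : 1 < B ^ m * (B - 1) := hwm.trans_le (by gcongr)
    linarith [pow_succ B m]
  have hσ : 0 < aeval B (betaOrbitPoly β n) :=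
    pos_of_mul_pos_left (hB ▸ one_pos) (by linarith [one_le_pow₀ hB1.le (n := m)])
  have horbit := iterate_betaT_one_eq_aeval (by linarith) hBβ.le hσ le_rfl
  refine ⟨B, ⟨hwB, hBβ⟩, isParry_and_not_isSimpleParry_of_isPeriodicPt hB1 m.succ_pos ?_
    (horbit ▸ hσ.ne')⟩
  rw [horbit]
  refine isPeriodicPt_betaT hB1.le hσ.le ?_ (by linear_combination hB)
  calc B ^ m * aeval B (betaOrbitPoly β n)
      < (B ^ (m + 1) - 1) * aeval B (betaOrbitPoly β n) := mul_lt_mul_of_pos_right hBpow hσ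
    _ = 1 := by linear_combination hB

theorem exists_transcendental_mem_Ioo {a b : ℝ} (h : a < b) :
    ∃ x ∈ Set.Ioo a b, Transcendental ℤ x := by
  obtain ⟨x, hx, hab⟩ := ((Algebraic.countable ℤ ℝ).dense_compl ℝ).exists_between h
  exact ⟨x, hab, hx⟩

/-- The set of non-simple Parry numbers is dense in `(1, ∞)`. -/
theorem nonSimpleParry_dense :
    ∀ u v : ℝ, 1 < u → u < v →
      ∃ β : ℝ, u < β ∧ β < v ∧ IsParry β ∧ ¬ IsSimpleParry β := by
  intro u v hu huv
  obtain ⟨β₀, ⟨huβ₀, hβ₀v⟩, hβ₀⟩ := exists_transcendental_mem_Ioo huv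
  obtain ⟨β, ⟨huβ, hββ₀⟩, hβ⟩ := exists_isParry_not_isSimpleParry_mem_Ioo hu huβ₀ hβ₀
  exact ⟨β, huβ, hββ₀.trans hβ₀v, hβ⟩
end

section
/- If α is a Perron number, then for every integer k ≥ 1 the power α^k is a Perron number, and the degree of the minimal polynomial of α^k over ℚ equals the degree of the minimal polynomial of α over ℚ. -/
open Polynomial IntermediateField

section Conjugates

variable {K L : Type*} [Field K] [Field L] [Algebra K L]

theorem exists_ne_aeval_minpoly_eq_zero {M : Type*} [Field M] [IsAlgClosed M] [CharZero M]
    [Algebra L M] {a : M} (ha : IsIntegral L a) (h : a ∉ (algebraMap L M).range) :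
    ∃ z, z ≠ a ∧ aeval z (minpoly L a) = 0 := by
  have : CharZero L := (RingHom.charZero_iff (algebraMap L M).injective).2 inferInstance
  have hcard : Fintype.card ((minpoly L a).rootSet M) = (minpoly L a).natDegree :=
    card_rootSet_eq_natDegree (minpoly.irreducible ha).separable (IsAlgClosed.splits _)
  have h2 := (minpoly.two_le_natDegree_iff ha).2 h
  obtain ⟨⟨z, hz⟩, hza⟩ := Fintype.exists_ne_of_one_lt_card (by rw [hcard]; omega)
    (⟨a, (mem_rootSet.2 ⟨minpoly.ne_zero ha, minpoly.aeval L a⟩)⟩ : (minpoly L a).rootSet M)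
  exact ⟨z, fun e => hza (Subtype.ext e), (mem_rootSet.1 hz).2⟩

theorem exists_ne_aeval_minpoly_pow_eq_of_notMem_adjoin [IsAlgClosed L] [CharZero L] {a : L}
    (ha : IsIntegral K a) {k : ℕ} (h : a ∉ K⟮a ^ k⟯) :
    ∃ z, z ≠ a ∧ aeval z (minpoly K a) = 0 ∧ z ^ k = a ^ k := by
  set F := K⟮a ^ k⟯
  obtain ⟨z, hza, hz⟩ := exists_ne_aeval_minpoly_eq_zero (ha.tower_top (A := F))
    (by rintro ⟨y, hy⟩; exact h (hy ▸ y.2))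
  refine ⟨z, hza, ?_, ?_⟩
  · rw [← aeval_map_algebraMap F]
    exact aeval_eq_zero_of_dvd_aeval_eq_zero (minpoly.dvd_map_of_isScalarTower K F a) hz
  · have hdvd : minpoly F a ∣ X ^ k - C (AdjoinSimple.gen K (a ^ k)) :=
      minpoly.dvd F a (by simp)
    simpa [sub_eq_zero] using aeval_eq_zero_of_dvd_aeval_eq_zero hdvd hz

theorem adjoin_simple_pow_eq_of_mem {a : L} {k : ℕ} (h : a ∈ K⟮a ^ k⟯) : K⟮a ^ k⟯ = K⟮a⟯ :=
  le_antisymm (adjoin_simple_le_iff.2 (pow_mem (mem_adjoin_simple_self K a) k))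
    (adjoin_simple_le_iff.2 h)

theorem natDegree_minpoly_pow_of_mem_adjoin {a : L} (ha : IsIntegral K a) {k : ℕ}
    (h : a ∈ K⟮a ^ k⟯) : (minpoly K (a ^ k)).natDegree = (minpoly K a).natDegree := by
  rw [← adjoin.finrank (ha.pow k), ← adjoin.finrank ha, adjoin_simple_pow_eq_of_mem h]

theorem exists_aeval_minpoly_eq_zero_pow_eq_of_mem_adjoin {M : Type*} [Field M] [Algebra K M]
    {a : L} (ha : IsIntegral K a) {k : ℕ} (h : a ∈ K⟮a ^ k⟯) {z : M}
    (hz : aeval z (minpoly K (a ^ k)) = 0) : ∃ w, aeval w (minpoly K a) = 0 ∧ w ^ k = z := by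
  let σ := (algHomAdjoinIntegralEquiv K (ha.pow k)).symm
    ⟨z, (mem_aroots.2 ⟨minpoly.ne_zero (ha.pow k), hz⟩)⟩
  refine ⟨σ ⟨a, h⟩, ?_, ?_⟩
  · have h0 : aeval (⟨a, h⟩ : K⟮a ^ k⟯) (minpoly K a) = 0 :=
      Subtype.ext ((aeval_coe _ _ _).symm.trans (minpoly.aeval K a))
    rw [aeval_algHom_apply, h0, map_zero]
  · rw [← map_pow]
    exact algHomAdjoinIntegralEquiv_symm_apply_gen K (ha.pow k) _

end Conjugates

theorem minpoly_rat_ofReal (x : ℝ) : minpoly ℚ (x : ℂ) = minpoly ℚ x :=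
  minpoly.algebraMap_eq (algebraMap ℝ ℂ).injective x

namespace IsPerron

variable {α : ℝ}

theorem isIntegral_ofReal (hα : IsPerron α) : IsIntegral ℚ (α : ℂ) :=
  hα.2.1.tower_top.algebraMap

theorem ofReal_mem_adjoin_pow (hα : IsPerron α) {k : ℕ} (hk : k ≠ 0) :
    (α : ℂ) ∈ ℚ⟮(α : ℂ) ^ k⟯ := by
  by_contra h
  obtain ⟨z, hzα, hz, hzk⟩ :=
    exists_ne_aeval_minpoly_pow_eq_of_notMem_adjoin hα.isIntegral_ofReal h
  rw [minpoly_rat_ofReal] at hz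
  have hnorm : ‖z‖ ^ k = α ^ k := by
    rw [← norm_pow, hzk, ← Complex.ofReal_pow, Complex.norm_real,
      Real.norm_of_nonneg (pow_nonneg (zero_le_one.trans hα.1.le) k)]
  exact (pow_lt_pow_left₀ (hα.2.2 z hz hzα) (norm_nonneg z) hk).ne hnorm

theorem norm_lt_pow_of_aeval_minpoly_pow (hα : IsPerron α) {k : ℕ} (hk : k ≠ 0) {z : ℂ}
    (hz : aeval z (minpoly ℚ (α ^ k)) = 0) (hzα : z ≠ ((α ^ k : ℝ) : ℂ)) : ‖z‖ < α ^ k := by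
  rw [← minpoly_rat_ofReal, Complex.ofReal_pow] at hz
  obtain ⟨w, hw, rfl⟩ := exists_aeval_minpoly_eq_zero_pow_eq_of_mem_adjoin
    hα.isIntegral_ofReal (hα.ofReal_mem_adjoin_pow hk) hz
  rw [minpoly_rat_ofReal] at hw
  have hwα : w ≠ α := by
    rintro rfl
    exact hzα (Complex.ofReal_pow α k).symm
  rw [norm_pow]
  exact pow_lt_pow_left₀ (hα.2.2 w hw hwα) (norm_nonneg w) hk

end IsPerron

/-- Powers of a Perron number are Perron numbers of the same degree. -/
theorem perron_pow (α : ℝ) (hα : IsPerron α) (k : ℕ) (hk : 1 ≤ k) :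
    IsPerron (α ^ k) ∧ (minpoly ℚ (α ^ k)).natDegree = (minpoly ℚ α).natDegree := by
  have hk0 : k ≠ 0 := Nat.one_le_iff_ne_zero.1 hk
  refine ⟨⟨one_lt_pow₀ hα.1 hk0, hα.2.1.pow k,
    fun z hz hzα => hα.norm_lt_pow_of_aeval_minpoly_pow hk0 hz hzα⟩, ?_⟩
  rw [← minpoly_rat_ofReal, ← minpoly_rat_ofReal, Complex.ofReal_pow]
  exact natDegree_minpoly_pow_of_mem_adjoin hα.isIntegral_ofReal (hα.ofReal_mem_adjoin_pow hk0)
end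

section
/- If there exists an integer n ≥ 1 such that the set H_n of Perron numbers of Parry order exactly n is dense in (1, ∞), then the set H₁ of Perron numbers of Parry order exactly 1 is also dense in (1, ∞). -/
/-! If `γ ∈ H_n` lies between `u ^ (1/n)` and `v ^ (1/n)`, then `γ ^ n` lies between `u` and `v`.
It is Perron because the conjugates of `γ ^ n` are the `n`-th powers of the conjugates of `γ`,
and it has Parry order `1` because `(γ ^ n) ^ k = γ ^ (n * k)` with `n * k > n` for `k > 1`. -/

open Polynomial IntermediateField

theorem exists_aeval_minpoly_eq_zero_pow_eq {K : Type*} [Field K] [CharZero K] {x : K}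
    (hx : IsIntegral ℚ x) (n : ℕ) {z : ℂ} (hz : aeval z (minpoly ℚ (x ^ n)) = 0) :
    ∃ w : ℂ, aeval w (minpoly ℚ x) = 0 ∧ w ^ n = z := by
  have : FiniteDimensional ℚ ℚ⟮x⟯ := adjoin.finiteDimensional hx
  have : NumberField ℚ⟮x⟯ := ⟨⟩
  set y := AdjoinSimple.gen ℚ x
  have hminpoly (m : ℕ) : minpoly ℚ (y ^ m) = minpoly ℚ (x ^ m) := by
    rw [← minpoly.algebraMap_eq (algebraMap ℚ⟮x⟯ K).injective, map_pow]
    rfl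
  have hy : IsIntegral ℚ y := (AdjoinSimple.isIntegral_gen ℚ x).mpr hx
  have hzroot : z ∈ (minpoly ℚ (y ^ n)).rootSet ℂ :=
    mem_rootSet.mpr ⟨minpoly.ne_zero (hy.pow n), (hminpoly n).symm ▸ hz⟩
  obtain ⟨φ, rfl⟩ :=
    (NumberField.Embeddings.range_eval_eq_rootSet_minpoly ℚ⟮x⟯ ℂ (y ^ n)).symm.subset hzroot
  refine ⟨φ y, ?_, (map_pow φ y n).symm⟩
  have hminpoly_gen : minpoly ℚ y = minpoly ℚ x := by simpa using hminpoly 1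
  rw [← hminpoly_gen]
  simpa using Polynomial.aeval_algHom_apply φ.toRatAlgHom y (minpoly ℚ y)

theorem IsPerron.pow {β : ℝ} (hβ : IsPerron β) {n : ℕ} (hn : n ≠ 0) : IsPerron (β ^ n) := by
  obtain ⟨hβ1, hint, hconj⟩ := hβ
  refine ⟨one_lt_pow₀ hβ1 hn, hint.pow n, fun z hz hne => ?_⟩
  obtain ⟨w, hw, rfl⟩ := exists_aeval_minpoly_eq_zero_pow_eq hint.tower_top n hz
  have hwβ : w ≠ β := by rintro rfl; exact hne (by push_cast; rfl)
  rw [norm_pow]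
  exact pow_lt_pow_left₀ (hconj w hw hwβ) (norm_nonneg w) hn

theorem HasParryOrder.pow {β : ℝ} {n m : ℕ} (h : HasParryOrder β (n * m)) (hn : 0 < n) :
    HasParryOrder (β ^ n) m := by
  refine ⟨fun hm => ?_, fun k hk => ?_⟩
  · rw [← pow_mul]
    exact h.1 (Nat.one_le_iff_ne_zero.mpr (Nat.mul_ne_zero hn.ne' (by omega)))
  · rw [← pow_mul]
    exact h.2 (n * k) (Nat.mul_lt_mul_of_pos_left hk hn)

theorem exists_pow_mem_Ioo_of_forall_exists_mem_Ioo {P : ℝ → Prop} {n : ℕ} (hn : n ≠ 0)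
    (hP : ∀ u v : ℝ, 1 < u → u < v → ∃ β, u < β ∧ β < v ∧ P β)
    {u v : ℝ} (hu : 1 < u) (huv : u < v) : ∃ γ, u < γ ^ n ∧ γ ^ n < v ∧ P γ := by
  have hinv_pos : (0 : ℝ) < (n : ℝ)⁻¹ := by positivity
  obtain ⟨γ, hγu, hγv, hγ⟩ := hP (u ^ (n⁻¹ : ℝ)) (v ^ (n⁻¹ : ℝ)) (Real.one_lt_rpow hu hinv_pos)
    (Real.rpow_lt_rpow (by linarith) huv hinv_pos)
  have hroot_nonneg : 0 ≤ u ^ (n⁻¹ : ℝ) := Real.rpow_nonneg (by linarith) _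
  refine ⟨γ, ?_, ?_, hγ⟩
  · calc u = (u ^ (n⁻¹ : ℝ)) ^ n := (Real.rpow_inv_natCast_pow (by linarith) hn).symm
      _ < γ ^ n := pow_lt_pow_left₀ hγu hroot_nonneg hn
  · calc γ ^ n < (v ^ (n⁻¹ : ℝ)) ^ n := pow_lt_pow_left₀ hγv (hroot_nonneg.trans hγu.le) hn
      _ = v := Real.rpow_inv_natCast_pow (by linarith) hn

/-- If some `H_n` (with `n ≥ 1`) is dense in `(1, ∞)`, then `H₁` is dense in `(1, ∞)`. -/
theorem H_one_dense_of_H_n_dense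
    (h : ∃ n : ℕ, 1 ≤ n ∧ ∀ u v : ℝ, 1 < u → u < v →
      ∃ β : ℝ, u < β ∧ β < v ∧ IsPerron β ∧ HasParryOrder β n) :
    ∀ u v : ℝ, 1 < u → u < v →
      ∃ β : ℝ, u < β ∧ β < v ∧ IsPerron β ∧ HasParryOrder β 1 := by
  intro u v hu huv
  obtain ⟨n, hn, hdense⟩ := h
  have hn0 : n ≠ 0 := by omega
  obtain ⟨γ, hγu, hγv, hγP, hγO⟩ :=
    exists_pow_mem_Ioo_of_forall_exists_mem_Ioo hn0 hdense hu huv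
  exact ⟨γ ^ n, hγu, hγv, hγP.pow hn0, HasParryOrder.pow (by rwa [mul_one]) hn⟩
end

section
/- Let a, b, c be real numbers and let β > 1 be a real number satisfying β³ = a·β² + b·β − c. Then 1 = a/β + Σ_{i=1}^∞ ((b − 1)/β^{2i} + (a − c)/β^{2i+1}), where the series converges. -/
theorem hasSum_mul_pow_even_add_mul_pow_odd {K : Type*} [NormedField K] [CompleteSpace K]
    {x : K} (hx : ‖x‖ < 1) (p q : K) :
    HasSum (fun i : ℕ => p * x ^ (2 * (i + 1)) + q * x ^ (2 * (i + 1) + 1))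
      ((p * x ^ 2 + q * x ^ 3) / (1 - x ^ 2)) := by
  have hx2 : ‖x ^ 2‖ < 1 := by
    rw [norm_pow]
    exact pow_lt_one₀ (norm_nonneg x) hx two_ne_zero
  have h := (hasSum_geometric_of_norm_lt_one hx2).mul_left (p * x ^ 2 + q * x ^ 3)
  rw [← div_eq_mul_inv] at h
  exact h.congr_fun fun i => by ring

/-- If `β > 1` satisfies `β³ = a·β² + b·β - c`, then
`1 = a/β + Σ_{i=1}^∞ ((b-1)/β^{2i} + (a-c)/β^{2i+1})`, the series converging. -/
theorem cubic_expansion_of_one (a b c β : ℝ) (hβ : 1 < β)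
    (hroot : β ^ 3 = a * β ^ 2 + b * β - c) :
    HasSum (fun i : ℕ => (b - 1) / β ^ (2 * (i + 1)) + (a - c) / β ^ (2 * (i + 1) + 1))
      (1 - a / β) := by
  have hx : ‖β⁻¹‖ < 1 := by
    rw [norm_inv, Real.norm_of_nonneg (by positivity)]
    exact inv_lt_one_of_one_lt₀ hβ
  have h := hasSum_mul_pow_even_add_mul_pow_odd hx (b - 1) (a - c)
  -- Cleared of denominators this is `(β - a)(β² - 1) = (b - 1)β + a - c`, i.e. `hroot`.
  have hsum : ((b - 1) * β⁻¹ ^ 2 + (a - c) * β⁻¹ ^ 3) / (1 - β⁻¹ ^ 2) = 1 - a / β := by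
    have hβ0 : β ≠ 0 := by positivity
    have hβ2 : β ^ 2 - 1 ≠ 0 := by nlinarith
    field_simp
    linear_combination -hroot
  rw [hsum] at h
  simpa only [div_eq_mul_inv, inv_pow] using h
end
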